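/- arXiv:2305.01609 — 5 statements merged into one kernel-verified Lean document; each statement's English description precedes it below -/
import Mathlib

section
/- Let R be a k-algebra that is a domain, σ an automorphism of R, and a a regular central element of R. Then the generalized Weyl algebra R(σ, a) is a domain. -/
/-!
The rank one algebra `R(σ, a)` acts on `ℤ →₀ R` by skew Laurent operators: `r` as
multiplication by `r`, `x` as the `σ`-twisted shift `t`, and `y` as `a t⁻¹`. The monomials
`r xⁱ` and `r yʲ` span `R(σ, a)`, and each acts as a single skew monomial `c tⁿ` where `c` is `r`
times a product of `σ`-translates of `a`, hence nonzero when `r` is. So a nonzero element acts as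
a nonzero skew Laurent polynomial, and such an operator is injective by comparing top-degree
coefficients. Hence if `u, v ≠ 0`, then `u v` does not kill the basis vector at `0`.
-/

/-- Presentation relations for the rank `n` generalized Weyl algebra `R(σ, a)`:
it is generated over `R` (whose ring structure is imposed by the first four
relation families) by `x_i = ι (inr (i, false))` and `y_i = ι (inr (i, true))`,
subject to `x_i r = σ_i(r) x_i`, `y_i r = σ_i⁻¹(r) y_i`, `y_i x_i = a_i`,
`x_i y_i = σ_i(a_i)`, and `[x_i, x_j] = [y_i, y_j] = [x_i, y_j] = 0` for `i ≠ j`. -/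
inductive GWARel (k R : Type*) [CommRing k] [Ring R] [Algebra k R]
    (n : ℕ) (σ : Fin n → R ≃ₐ[k] R) (a : Fin n → R) :
    FreeAlgebra k (R ⊕ Fin n × Bool) → FreeAlgebra k (R ⊕ Fin n × Bool) → Prop
  | add (r s : R) : GWARel k R n σ a (FreeAlgebra.ι k (.inl (r + s)))
      (FreeAlgebra.ι k (.inl r) + FreeAlgebra.ι k (.inl s))
  | mul (r s : R) : GWARel k R n σ a (FreeAlgebra.ι k (.inl (r * s)))
      (FreeAlgebra.ι k (.inl r) * FreeAlgebra.ι k (.inl s))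
  | smul (c : k) (r : R) : GWARel k R n σ a (FreeAlgebra.ι k (.inl (c • r)))
      (c • FreeAlgebra.ι k (.inl r))
  | one : GWARel k R n σ a (FreeAlgebra.ι k (.inl 1)) 1
  | xr (i : Fin n) (r : R) : GWARel k R n σ a
      (FreeAlgebra.ι k (.inr (i, false)) * FreeAlgebra.ι k (.inl r))
      (FreeAlgebra.ι k (.inl (σ i r)) * FreeAlgebra.ι k (.inr (i, false)))
  | yr (i : Fin n) (r : R) : GWARel k R n σ a
      (FreeAlgebra.ι k (.inr (i, true)) * FreeAlgebra.ι k (.inl r))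
      (FreeAlgebra.ι k (.inl ((σ i).symm r)) * FreeAlgebra.ι k (.inr (i, true)))
  | yx (i : Fin n) : GWARel k R n σ a
      (FreeAlgebra.ι k (.inr (i, true)) * FreeAlgebra.ι k (.inr (i, false)))
      (FreeAlgebra.ι k (.inl (a i)))
  | xy (i : Fin n) : GWARel k R n σ a
      (FreeAlgebra.ι k (.inr (i, false)) * FreeAlgebra.ι k (.inr (i, true)))
      (FreeAlgebra.ι k (.inl (σ i (a i))))
  | comm (i j : Fin n) (s t : Bool) (h : i ≠ j) : GWARel k R n σ a
      (FreeAlgebra.ι k (.inr (i, s)) * FreeAlgebra.ι k (.inr (j, t)))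
      (FreeAlgebra.ι k (.inr (j, t)) * FreeAlgebra.ι k (.inr (i, s)))

/-- The rank `n` generalized Weyl algebra `R(σ, a)`, presented by generators and
relations. -/
abbrev GWA (k R : Type*) [CommRing k] [Ring R] [Algebra k R]
    (n : ℕ) (σ : Fin n → R ≃ₐ[k] R) (a : Fin n → R) : Type _ :=
  RingQuot (GWARel k R n σ a)

/-- The image of `r ∈ R` in the generalized Weyl algebra. -/
noncomputable def GWA.r (k R : Type*) [CommRing k] [Ring R] [Algebra k R]
    {n : ℕ} (σ : Fin n → R ≃ₐ[k] R) (a : Fin n → R) (r : R) : GWA k R n σ a :=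
  RingQuot.mkAlgHom k (GWARel k R n σ a) (FreeAlgebra.ι k (.inl r))

/-- The generator `x_i` of the generalized Weyl algebra. -/
noncomputable def GWA.x (k R : Type*) [CommRing k] [Ring R] [Algebra k R]
    {n : ℕ} (σ : Fin n → R ≃ₐ[k] R) (a : Fin n → R) (i : Fin n) : GWA k R n σ a :=
  RingQuot.mkAlgHom k (GWARel k R n σ a) (FreeAlgebra.ι k (.inr (i, false)))

/-- The generator `y_i` of the generalized Weyl algebra. -/
noncomputable def GWA.y (k R : Type*) [CommRing k] [Ring R] [Algebra k R]
    {n : ℕ} (σ : Fin n → R ≃ₐ[k] R) (a : Fin n → R) (i : Fin n) : GWA k R n σ a :=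
  RingQuot.mkAlgHom k (GWARel k R n σ a) (FreeAlgebra.ι k (.inr (i, true)))

noncomputable section

namespace SkewLaurent

variable {k R : Type*} [CommRing k] [Ring R] [Algebra k R]

def monomialOp (σ : R ≃ₐ[k] R) (r : R) (m : ℤ) : Module.End k (ℤ →₀ R) :=
  Finsupp.mapRange.linearMap (LinearMap.mulLeft k r ∘ₗ (σ ^ m).toLinearMap) ∘ₗ
    (Finsupp.domLCongr (Equiv.addRight m)).toLinearMap

variable (σ : R ≃ₐ[k] R)

@[simp] lemma monomialOp_apply (r : R) (m : ℤ) (f : ℤ →₀ R) (n : ℤ) :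
    monomialOp σ r m f n = r * (σ ^ m) (f (n - m)) := by
  simp [monomialOp, Finsupp.domLCongr_apply, Finsupp.equivMapDomain_apply]
  rfl

lemma monomialOp_mul (r s : R) (m p : ℤ) :
    monomialOp σ r m * monomialOp σ s p = monomialOp σ (r * (σ ^ m) s) (m + p) := by
  ext f n
  simp [mul_assoc, zpow_add, sub_sub]

@[simp] lemma monomialOp_one_zero : monomialOp σ (1 : R) 0 = 1 := by
  ext f n; simp

lemma monomialOp_add (r s : R) (m : ℤ) :
    monomialOp σ (r + s) m = monomialOp σ r m + monomialOp σ s m := by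
  ext f n; simp [add_mul]

lemma monomialOp_smul (c : k) (r : R) (m : ℤ) :
    monomialOp σ (c • r) m = c • monomialOp σ r m := by
  ext f n; simp

lemma exists_monomialOp_pow [IsDomain R] {c : R} (hc : c ≠ 0) (m : ℤ) (j : ℕ) :
    ∃ d : R, d ≠ 0 ∧ monomialOp σ c m ^ j = monomialOp σ d (j * m) := by
  induction j with
  | zero => exact ⟨1, one_ne_zero, by simp⟩
  | succ j ih =>
    obtain ⟨d, hd, hpow⟩ := ih
    refine ⟨d * (σ ^ ((j : ℤ) * m)) c, mul_ne_zero hd (by simpa using hc), ?_⟩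
    rw [pow_succ, hpow, monomialOp_mul]
    push_cast
    ring_nf

lemma sum_monomialOp_apply_ne_zero [IsDomain R] {s : Finset ℤ} (hs : s.Nonempty)
    {c : ℤ → R} (hc : ∀ n ∈ s, c n ≠ 0) {g : ℤ →₀ R} (hg : g ≠ 0) :
    (∑ n ∈ s, monomialOp σ (c n) n) g ≠ 0 := by
  have hgs : g.support.Nonempty := Finsupp.support_nonempty_iff.mpr hg
  set p := s.max' hs
  set q := g.support.max' hgs
  intro h
  -- only `n = p` contributes to the coefficient of degree `p + q`
  have hpq := DFunLike.congr_fun h (p + q)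
  rw [LinearMap.sum_apply, Finsupp.finsetSum_apply, Finset.sum_eq_single p] at hpq
  · simp only [monomialOp_apply, add_sub_cancel_left, Finsupp.coe_zero, Pi.zero_apply] at hpq
    exact mul_ne_zero (hc p (s.max'_mem hs))
      (by simpa using Finsupp.mem_support_iff.mp (g.support.max'_mem hgs)) hpq
  · intro n hn hnp
    have hq : q < p + q - n := by have := s.le_max' n hn; omega
    rw [monomialOp_apply, Finsupp.notMem_support_iff.mp fun hmem =>
      not_le.mpr hq (g.support.le_max' _ hmem), map_zero, mul_zero]
  · exact fun hp => absurd (s.max'_mem hs) hp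

end SkewLaurent

namespace GWA

open SkewLaurent

variable {k R : Type*} [CommRing k] [Ring R] [Algebra k R]

section relations

variable {n : ℕ} (σ : Fin n → R ≃ₐ[k] R) (a : Fin n → R)

def rAlgHom : R →ₐ[k] GWA k R n σ a :=
  AlgHom.ofLinearMap
    { toFun := GWA.r k R σ a
      map_add' r s := by
        simpa only [GWA.r, map_add] using RingQuot.mkAlgHom_rel k (GWARel.add r s)
      map_smul' c r := by
        simpa only [GWA.r, map_smul, RingHom.id_apply] using
          RingQuot.mkAlgHom_rel k (GWARel.smul c r) }
    (by
      simpa only [LinearMap.coe_mk, AddHom.coe_mk, GWA.r, map_one] using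
        RingQuot.mkAlgHom_rel k (GWARel.one (σ := σ) (a := a)))
    (fun r s => by
      simpa only [LinearMap.coe_mk, AddHom.coe_mk, GWA.r, map_mul] using
        RingQuot.mkAlgHom_rel k (GWARel.mul r s))

@[simp] lemma rAlgHom_apply (r : R) : rAlgHom σ a r = GWA.r k R σ a r := rfl

lemma x_mul_r (i : Fin n) (r : R) :
    GWA.x k R σ a i * GWA.r k R σ a r = GWA.r k R σ a (σ i r) * GWA.x k R σ a i := by
  simpa only [GWA.x, GWA.r, map_mul] using
    RingQuot.mkAlgHom_rel k (GWARel.xr (σ := σ) (a := a) i r)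

lemma y_mul_r (i : Fin n) (r : R) :
    GWA.y k R σ a i * GWA.r k R σ a r = GWA.r k R σ a ((σ i).symm r) * GWA.y k R σ a i := by
  simpa only [GWA.y, GWA.r, map_mul] using
    RingQuot.mkAlgHom_rel k (GWARel.yr (σ := σ) (a := a) i r)

lemma y_mul_x (i : Fin n) : GWA.y k R σ a i * GWA.x k R σ a i = GWA.r k R σ a (a i) := by
  simpa only [GWA.x, GWA.y, GWA.r, map_mul] using
    RingQuot.mkAlgHom_rel k (GWARel.yx (σ := σ) (a := a) i)

lemma x_mul_y (i : Fin n) :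
    GWA.x k R σ a i * GWA.y k R σ a i = GWA.r k R σ a (σ i (a i)) := by
  simpa only [GWA.x, GWA.y, GWA.r, map_mul] using
    RingQuot.mkAlgHom_rel k (GWARel.xy (σ := σ) (a := a) i)

end relations

variable (σ : R ≃ₐ[k] R) (a : R)

def xyPow (n : ℤ) : GWA k R 1 ![σ] ![a] :=
  if 0 ≤ n then GWA.x k R ![σ] ![a] 0 ^ n.toNat else GWA.y k R ![σ] ![a] 0 ^ (-n).toNat

lemma xyPow_of_nonneg {n : ℤ} (h : 0 ≤ n) : xyPow σ a n = GWA.x k R ![σ] ![a] 0 ^ n.toNat :=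
  if_pos h

lemma xyPow_of_nonpos {n : ℤ} (h : n ≤ 0) : xyPow σ a n = GWA.y k R ![σ] ![a] 0 ^ (-n).toNat := by
  rcases h.lt_or_eq with h | rfl
  · exact if_neg (by omega)
  · simp [xyPow]

lemma x_mul_xyPow (n : ℤ) :
    GWA.x k R ![σ] ![a] 0 * xyPow σ a n
      = GWA.r k R ![σ] ![a] (if 0 ≤ n then 1 else σ a) * xyPow σ a (n + 1) := by
  by_cases h : 0 ≤ n
  · rw [if_pos h, ← rAlgHom_apply, map_one, one_mul, xyPow_of_nonneg σ a h,
      xyPow_of_nonneg σ a (by omega), ← pow_succ', show (n + 1).toNat = n.toNat + 1 by omega]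
  · rw [if_neg h, xyPow_of_nonpos σ a (by omega), xyPow_of_nonpos σ a (by omega),
      show (-n).toNat = (-(n + 1)).toNat + 1 by omega, pow_succ', ← mul_assoc, x_mul_y]
    rfl

lemma y_mul_xyPow (n : ℤ) :
    GWA.y k R ![σ] ![a] 0 * xyPow σ a n
      = GWA.r k R ![σ] ![a] (if 0 < n then a else 1) * xyPow σ a (n - 1) := by
  by_cases h : 0 < n
  · rw [if_pos h, xyPow_of_nonneg σ a (by omega), xyPow_of_nonneg σ a (by omega),
      show n.toNat = (n - 1).toNat + 1 by omega, pow_succ', ← mul_assoc, y_mul_x]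
    rfl
  · rw [if_neg h, ← rAlgHom_apply, map_one, one_mul, xyPow_of_nonpos σ a (by omega),
      xyPow_of_nonpos σ a (by omega), ← pow_succ', show (-(n - 1)).toNat = (-n).toNat + 1 by omega]

def ofCoeffs : (ℤ →₀ R) →ₗ[k] GWA k R 1 ![σ] ![a] :=
  Finsupp.lsum k fun n => LinearMap.mulRight k (xyPow σ a n) ∘ₗ (rAlgHom ![σ] ![a]).toLinearMap

lemma ofCoeffs_apply (f : ℤ →₀ R) :
    ofCoeffs σ a f = f.sum fun n r => GWA.r k R ![σ] ![a] r * xyPow σ a n := by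
  rw [ofCoeffs, Finsupp.lsum_apply]
  rfl

lemma r_mul_xyPow_mem_range (r : R) (n : ℤ) :
    GWA.r k R ![σ] ![a] r * xyPow σ a n ∈ LinearMap.range (ofCoeffs σ a) :=
  ⟨Finsupp.single n r, by
    rw [ofCoeffs_apply, Finsupp.sum_single_index (by rw [← rAlgHom_apply, map_zero, zero_mul])]⟩

lemma mkAlgHom_mul_mem_range (w : FreeAlgebra k (R ⊕ Fin 1 × Bool)) {v : GWA k R 1 ![σ] ![a]}
    (hv : v ∈ LinearMap.range (ofCoeffs σ a)) :
    RingQuot.mkAlgHom k _ w * v ∈ LinearMap.range (ofCoeffs σ a) := by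
  induction w using FreeAlgebra.induction generalizing v with
  | grade0 c =>
    rw [AlgHom.commutes, Algebra.algebraMap_eq_smul_one, smul_one_mul]
    exact Submodule.smul_mem _ c hv
  | grade1 g =>
    obtain ⟨f, rfl⟩ := hv
    rw [ofCoeffs_apply, Finsupp.sum, Finset.mul_sum]
    refine Submodule.sum_mem _ fun n _ => ?_
    rcases g with s | ⟨i, _ | _⟩
    · change GWA.r k R _ _ s * _ ∈ _
      rw [← mul_assoc, ← rAlgHom_apply, ← rAlgHom_apply, ← map_mul]
      exact r_mul_xyPow_mem_range σ a _ n
    · obtain rfl := Subsingleton.elim i 0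
      change GWA.x k R _ _ 0 * _ ∈ _
      rw [← mul_assoc, x_mul_r, mul_assoc, x_mul_xyPow, ← mul_assoc, ← rAlgHom_apply,
        ← rAlgHom_apply, ← map_mul]
      exact r_mul_xyPow_mem_range σ a _ _
    · obtain rfl := Subsingleton.elim i 0
      change GWA.y k R _ _ 0 * _ ∈ _
      rw [← mul_assoc, y_mul_r, mul_assoc, y_mul_xyPow, ← mul_assoc, ← rAlgHom_apply,
        ← rAlgHom_apply, ← map_mul]
      exact r_mul_xyPow_mem_range σ a _ _
  | mul w₁ w₂ ih₁ ih₂ =>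
    rw [map_mul, mul_assoc]
    exact ih₁ (ih₂ hv)
  | add w₁ w₂ ih₁ ih₂ =>
    rw [map_add, add_mul]
    exact Submodule.add_mem _ (ih₁ hv) (ih₂ hv)

lemma ofCoeffs_surjective : Function.Surjective (ofCoeffs σ a) := by
  intro u
  obtain ⟨w, rfl⟩ := RingQuot.mkAlgHom_surjective k _ u
  have hone : (1 : GWA k R 1 ![σ] ![a]) ∈ LinearMap.range (ofCoeffs σ a) := by
    simpa [← rAlgHom_apply, xyPow] using r_mul_xyPow_mem_range σ a 1 0
  simpa using mkAlgHom_mul_mem_range σ a w hone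

variable {a}

def skewLaurentRep (hcent : ∀ r : R, a * r = r * a) :
    GWA k R 1 ![σ] ![a] →ₐ[k] Module.End k (ℤ →₀ R) :=
  RingQuot.liftAlgHom k ⟨FreeAlgebra.lift k (Sum.elim (fun r => monomialOp σ r 0)
    fun p => if p.2 then monomialOp σ a (-1) else monomialOp σ 1 1), by
    intro u v h
    induction h with
    | add r s => simp [monomialOp_add]
    | mul r s => simp [monomialOp_mul]
    | smul c r => simp [monomialOp_smul]
    | one => simp
    | xr i r => simp [monomialOp_mul]
    | yr i r => simp [monomialOp_mul, hcent]
    | yx i => simp [monomialOp_mul]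
    | xy i => simp [monomialOp_mul]
    | comm i j s t h => exact absurd (Subsingleton.elim i j) h⟩

variable (hcent : ∀ r : R, a * r = r * a)

@[simp] lemma skewLaurentRep_r (r : R) :
    skewLaurentRep σ hcent (GWA.r k R ![σ] ![a] r) = monomialOp σ r 0 := by
  simp [skewLaurentRep, GWA.r]

@[simp] lemma skewLaurentRep_x :
    skewLaurentRep σ hcent (GWA.x k R ![σ] ![a] 0) = monomialOp σ 1 1 := by
  simp [skewLaurentRep, GWA.x]

@[simp] lemma skewLaurentRep_y :
    skewLaurentRep σ hcent (GWA.y k R ![σ] ![a] 0) = monomialOp σ a (-1) := by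
  simp [skewLaurentRep, GWA.y]

variable [IsDomain R]

lemma exists_skewLaurentRep_xyPow (ha : a ≠ 0) (n : ℤ) :
    ∃ c : R, c ≠ 0 ∧ skewLaurentRep σ hcent (xyPow σ a n) = monomialOp σ c n := by
  by_cases h : 0 ≤ n
  · obtain ⟨c, hc, hpow⟩ := exists_monomialOp_pow σ one_ne_zero 1 n.toNat
    refine ⟨c, hc, ?_⟩
    rw [xyPow_of_nonneg σ a h, map_pow, skewLaurentRep_x, hpow]
    congr 1
    omega
  · obtain ⟨c, hc, hpow⟩ := exists_monomialOp_pow σ ha (-1) (-n).toNat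
    refine ⟨c, hc, ?_⟩
    rw [xyPow_of_nonpos σ a (by omega), map_pow, skewLaurentRep_y, hpow]
    congr 1
    omega

lemma exists_skewLaurentRep_eq_sum (ha : a ≠ 0) {u : GWA k R 1 ![σ] ![a]} (hu : u ≠ 0) :
    ∃ s : Finset ℤ, s.Nonempty ∧ ∃ c : ℤ → R, (∀ n ∈ s, c n ≠ 0) ∧
      skewLaurentRep σ hcent u = ∑ n ∈ s, monomialOp σ (c n) n := by
  obtain ⟨f, rfl⟩ := ofCoeffs_surjective σ a u
  choose w hw hrep using exists_skewLaurentRep_xyPow σ hcent ha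
  have hf : f ≠ 0 := by rintro rfl; exact hu (map_zero _)
  refine ⟨f.support, Finsupp.support_nonempty_iff.mpr hf, fun n => f n * w n,
    fun n hn => mul_ne_zero (Finsupp.mem_support_iff.mp hn) (hw n), ?_⟩
  rw [ofCoeffs_apply, Finsupp.sum, map_sum]
  refine Finset.sum_congr rfl fun n _ => ?_
  rw [map_mul, skewLaurentRep_r, hrep, monomialOp_mul, zpow_zero, zero_add]
  rfl

end GWA

end

/-- If `R` is a `k`-algebra that is a domain, `σ` an automorphism of `R`,
and `a` a regular central element, then the rank one GWA `R(σ, a)` is a domain. -/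
theorem gwa_isDomain (k R : Type*) [CommRing k] [Ring R] [Algebra k R] [IsDomain R]
    (σ : R ≃ₐ[k] R) (a : R) (hreg : a ∈ nonZeroDivisors R) (hcent : ∀ r : R, a * r = r * a) :
    IsDomain (GWA k R 1 ![σ] ![a]) := by
  have ha : a ≠ 0 := nonZeroDivisors.ne_zero hreg
  have : Nontrivial (GWA k R 1 ![σ] ![a]) :=
    (GWA.skewLaurentRep σ hcent).toRingHom.domain_nontrivial
  have : NoZeroDivisors (GWA k R 1 ![σ] ![a]) := by
    refine ⟨fun {u v} huv => or_iff_not_and_not.mpr fun ⟨hu, hv⟩ => ?_⟩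
    obtain ⟨s, hs, c, hc, hu_rep⟩ := GWA.exists_skewLaurentRep_eq_sum σ hcent ha hu
    obtain ⟨t, ht, d, hd, hv_rep⟩ := GWA.exists_skewLaurentRep_eq_sum σ hcent ha hv
    have hδ : (Finsupp.single 0 1 : ℤ →₀ R) ≠ 0 := by simp
    apply SkewLaurent.sum_monomialOp_apply_ne_zero σ hs hc
      (SkewLaurent.sum_monomialOp_apply_ne_zero σ ht hd hδ)
    rw [← hu_rep, ← hv_rep, ← Module.End.mul_apply, ← map_mul, huv, map_zero, LinearMap.zero_apply]
  exact NoZeroDivisors.to_isDomain _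
end

section
/- Let J(a) = k[z](σ, a) be a classical generalized Weyl algebra with σ(z) = z - 1 and a ∈ k[z] nonzero, over an algebraically closed field k of characteristic zero. If a has a pair of roots r₁, r₂ with r₁ - r₂ a positive integer, then J(a) is not simple. -/
/-- The automorphism `σ` of `k[z]` with `σ(z) = z - 1`. -/
noncomputable def shiftDown (k : Type*) [CommRing k] : Polynomial k ≃ₐ[k] Polynomial k :=
  AlgEquiv.ofAlgHom (Polynomial.aeval (Polynomial.X - 1)) (Polynomial.aeval (Polynomial.X + 1))
    (by ext : 1; simp) (by ext : 1; simp)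

/-! Let `r₁ = r₂ + m`. The polynomial ring acts diagonally on `V = ⊕ₙ k eₙ` by
`z eₙ = (r₂ + 1 + n) eₙ`, while `x eₙ = eₙ₊₁` and `y eₙ = a(r₂ + n) eₙ₋₁`; the relations
`yx = a(z)` and `xy = a(z - 1)` hold because `a(r₂) = 0` kills `y e₀`. The second root `r₂ + m`
kills `y eₘ`, so `span {eₙ | n ≥ m}` is a submodule, and the elements of `J(a)` mapping all of `V`
into it form a two-sided ideal. It contains `xᵐ ≠ 0` but not `1`. -/

open Polynomial Finsupp

section ShiftDown

variable {k : Type*} [CommRing k]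

theorem shiftDown_apply (p : k[X]) : shiftDown k p = p.comp (X - 1) :=
  (comp_eq_aeval).symm

theorem shiftDown_symm_apply (p : k[X]) : (shiftDown k).symm p = p.comp (X + 1) :=
  (comp_eq_aeval).symm

@[simp]
theorem eval_shiftDown (p : k[X]) (t : k) : (shiftDown k p).eval t = p.eval (t - 1) := by
  simp [shiftDown_apply]

@[simp]
theorem eval_shiftDown_symm (p : k[X]) (t : k) :
    ((shiftDown k).symm p).eval t = p.eval (t + 1) := by
  simp [shiftDown_symm_apply]

end ShiftDown

section Operators

variable {k : Type*} [CommSemiring k]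

noncomputable def weightOp (c : ℕ → k) : Module.End k (ℕ →₀ k) :=
  Finsupp.lsum k fun n => c n • Finsupp.lsingle n

noncomputable def raiseOp : Module.End k (ℕ →₀ k) :=
  Finsupp.lsum k fun n => Finsupp.lsingle (n + 1)

/-- `n - 1` is truncated: `lowerOp μ e₀ = μ 0 • e₀`. -/
noncomputable def lowerOp (μ : ℕ → k) : Module.End k (ℕ →₀ k) :=
  Finsupp.lsum k fun n => μ n • Finsupp.lsingle (n - 1)

@[simp]
theorem weightOp_single (c : ℕ → k) (n : ℕ) (t : k) :
    weightOp c (single n t) = c n • single n t := by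
  simp [weightOp, smul_single, mul_comm]

@[simp]
theorem raiseOp_single (n : ℕ) (t : k) : raiseOp (single n t) = single (n + 1) t := by
  simp [raiseOp]

@[simp]
theorem lowerOp_single (μ : ℕ → k) (n : ℕ) (t : k) :
    lowerOp μ (single n t) = μ n • single (n - 1) t := by
  simp [lowerOp, smul_single]

theorem raiseOp_pow_single (j n : ℕ) (t : k) :
    (raiseOp ^ j : Module.End k (ℕ →₀ k)) (single n t) = single (n + j) t := by
  induction j with
  | zero => rfl
  | succ j ih => rw [pow_succ', Module.End.mul_apply, ih, raiseOp_single, add_assoc]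

theorem supported_le_comap_of_single {s : Set ℕ} {f : Module.End k (ℕ →₀ k)}
    (h : ∀ n ∈ s, f (single n 1) ∈ supported k k s) :
    supported k k s ≤ (supported k k s).comap f :=
  (supported_eq_span_single k s).le.trans <| Submodule.span_le.2 <| by
    rintro _ ⟨n, hn, rfl⟩
    exact h n hn

theorem supported_Ici_le_comap_raiseOp (m : ℕ) :
    supported k k (Set.Ici m) ≤ (supported k k (Set.Ici m)).comap raiseOp :=
  supported_le_comap_of_single fun n hn => by
    rw [raiseOp_single]
    exact single_mem_supported k 1 (Nat.le_succ_of_le hn)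

theorem supported_Ici_le_comap_lowerOp {μ : ℕ → k} {m : ℕ} (hμ : μ m = 0) :
    supported k k (Set.Ici m) ≤ (supported k k (Set.Ici m)).comap (lowerOp μ) :=
  supported_le_comap_of_single fun n hn => by
    rw [lowerOp_single]
    rcases (Set.mem_Ici.1 hn).eq_or_lt with rfl | hlt
    · simp [hμ]
    · exact Submodule.smul_mem _ _ (single_mem_supported k 1 (Nat.le_sub_one_of_lt hlt))

theorem raiseOp_pow_mem_supported_Ici (m : ℕ) (v : ℕ →₀ k) :
    (raiseOp ^ m : Module.End k (ℕ →₀ k)) v ∈ supported k k (Set.Ici m) := by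
  induction v using Finsupp.induction_linear with
  | zero => simp
  | add v w hv hw => rw [map_add]; exact Submodule.add_mem _ hv hw
  | single n t =>
      rw [raiseOp_pow_single]
      exact single_mem_supported k t (Nat.le_add_left m n)

end Operators

theorem FreeAlgebra.le_comap_lift {R X M : Type*} [CommSemiring R] [AddCommMonoid M]
    [Module R M]
    (g : X → Module.End R M) (W : Submodule R M) (hg : ∀ x, W ≤ W.comap (g x))
    (f : FreeAlgebra R X) : W ≤ W.comap (FreeAlgebra.lift R g f) := by
  induction f using FreeAlgebra.induction with
  | grade0 c =>
      intro v hv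
      simpa [Module.algebraMap_end_apply] using W.smul_mem c hv
  | grade1 x => simpa using hg x
  | mul f₁ f₂ h₁ h₂ => intro v hv; simpa using h₁ (h₂ hv)
  | add f₁ f₂ h₁ h₂ => intro v hv; simpa using W.add_mem (h₁ hv) (h₂ hv)

def TwoSidedIdeal.ofMapsInto {A R M : Type*} [Ring A] [Ring R] [AddCommGroup M]
    [Module R M] (ψ : A →+* Module.End R M) (W : Submodule R M)
    (hW : ∀ g, W ≤ W.comap (ψ g)) : TwoSidedIdeal A :=
  TwoSidedIdeal.mk' {g | ∀ v, ψ g v ∈ W}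
    (fun v => by simp)
    (fun hg hh v => by simpa using W.add_mem (hg v) (hh v))
    (fun hg v => by simpa using W.neg_mem (hg v))
    (fun {g _} hh v => by simpa using hW g (hh v))
    (fun {_ h} hg v => by simpa using hg (ψ h v))

theorem TwoSidedIdeal.mem_ofMapsInto {A R M : Type*} [Ring A] [Ring R] [AddCommGroup M]
    [Module R M] {ψ : A →+* Module.End R M} {W : Submodule R M}
    {hW : ∀ g, W ≤ W.comap (ψ g)} {g : A} : g ∈ TwoSidedIdeal.ofMapsInto ψ W hW ↔ ∀ v, ψ g v ∈ W :=
  TwoSidedIdeal.mem_mk' _ _ _ _ _ _ _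

section Representation

variable {k : Type*} [CommRing k] (a : k[X]) (r : k)

@[simp]
theorem aeval_weightOp_single (c : ℕ → k) (p : k[X]) (n : ℕ) (t : k) :
    aeval (weightOp c) p (single n t) = p.eval (c n) • single n t :=
  Module.End.aeval_apply_of_mem_apply_eq_smul (weightOp_single c n t)

theorem supported_Ici_le_comap_aeval_weightOp (c : ℕ → k) (p : k[X]) (m : ℕ) :
    supported k k (Set.Ici m) ≤ (supported k k (Set.Ici m)).comap (aeval (weightOp c) p) :=
  supported_le_comap_of_single fun n hn => by
    rw [aeval_weightOp_single]
    exact Submodule.smul_mem _ _ (single_mem_supported k 1 hn)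

noncomputable def gwaGenAction :
    FreeAlgebra k (k[X] ⊕ Fin 1 × Bool) →ₐ[k] Module.End k (ℕ →₀ k) :=
  FreeAlgebra.lift k <| Sum.elim (fun p => aeval (weightOp fun n => r + 1 + n) p)
    fun i => if i.2 then lowerOp fun n => a.eval (r + n) else raiseOp

@[simp]
theorem gwaGenAction_ι_inl (p : k[X]) :
    gwaGenAction a r (FreeAlgebra.ι k (.inl p)) = aeval (weightOp fun n => r + 1 + n) p := by
  simp [gwaGenAction]

@[simp]
theorem gwaGenAction_ι_x (i : Fin 1) :
    gwaGenAction a r (FreeAlgebra.ι k (.inr (i, false))) = raiseOp := by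
  simp [gwaGenAction]

@[simp]
theorem gwaGenAction_ι_y (i : Fin 1) :
    gwaGenAction a r (FreeAlgebra.ι k (.inr (i, true))) = lowerOp fun n => a.eval (r + n) := by
  simp [gwaGenAction]

theorem gwaGenAction_respects (hr : a.IsRoot r) ⦃f g⦄
    (h : GWARel k k[X] 1 ![shiftDown k] ![a] f g) : gwaGenAction a r f = gwaGenAction a r g := by
  induction h with
  | add p q => simp
  | mul p q => simp
  | smul c p => simp
  | one => simp
  | comm i j s t hij => exact absurd (Subsingleton.elim i j) hij
  | xr i p =>
      refine Finsupp.lhom_ext fun n t => ?_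
      simp only [map_mul, gwaGenAction_ι_inl, gwaGenAction_ι_x, Matrix.cons_val_fin_one,
        Module.End.mul_apply, aeval_weightOp_single, raiseOp_single, map_smul, eval_shiftDown]
      push_cast
      ring_nf
  | yr i p =>
      refine Finsupp.lhom_ext fun n t => ?_
      simp only [map_mul, gwaGenAction_ι_inl, gwaGenAction_ι_y, Matrix.cons_val_fin_one,
        Module.End.mul_apply, aeval_weightOp_single, lowerOp_single, map_smul, smul_smul,
        eval_shiftDown_symm]
      rcases n with _ | n
      · simp [hr.eq_zero]
      · push_cast
        ring_nf
  | yx i =>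
      refine Finsupp.lhom_ext fun n t => ?_
      simp only [map_mul, gwaGenAction_ι_x, gwaGenAction_ι_y, gwaGenAction_ι_inl,
        Matrix.cons_val_fin_one, Module.End.mul_apply, aeval_weightOp_single, lowerOp_single,
        raiseOp_single, Nat.add_sub_cancel]
      push_cast
      ring_nf
  | xy i =>
      refine Finsupp.lhom_ext fun n t => ?_
      simp only [map_mul, gwaGenAction_ι_x, gwaGenAction_ι_y, gwaGenAction_ι_inl,
        Matrix.cons_val_fin_one, Module.End.mul_apply, aeval_weightOp_single, lowerOp_single,
        raiseOp_single, map_smul, eval_shiftDown]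
      rcases n with _ | n
      · simp [hr.eq_zero]
      · push_cast
        ring_nf

noncomputable def gwaAction (hr : a.IsRoot r) :
    GWA k k[X] 1 ![shiftDown k] ![a] →ₐ[k] Module.End k (ℕ →₀ k) :=
  RingQuot.liftAlgHom k ⟨gwaGenAction a r, gwaGenAction_respects a r hr⟩

theorem gwaAction_x (hr : a.IsRoot r) :
    gwaAction a r hr (GWA.x k k[X] ![shiftDown k] ![a] 0) = raiseOp := by
  simp [gwaAction, GWA.x]

theorem supported_Ici_le_comap_gwaAction (hr : a.IsRoot r) {m : ℕ} (hm : a.IsRoot (r + m))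
    (g : GWA k k[X] 1 ![shiftDown k] ![a]) :
    supported k k (Set.Ici m) ≤ (supported k k (Set.Ici m)).comap (gwaAction a r hr g) := by
  obtain ⟨f, rfl⟩ := RingQuot.mkAlgHom_surjective k _ g
  rw [gwaAction, RingQuot.liftAlgHom_mkAlgHom_apply]
  refine FreeAlgebra.le_comap_lift _ _ (fun x => ?_) f
  rcases x with p | ⟨i, _ | _⟩
  · exact supported_Ici_le_comap_aeval_weightOp _ p m
  · exact supported_Ici_le_comap_raiseOp m
  · exact supported_Ici_le_comap_lowerOp hm.eq_zero

end Representation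

theorem classical_gwa_congruent_roots_not_simple_general (k : Type*) [Field k]
    (a : Polynomial k)
    (r₁ r₂ : k) (h₁ : a.IsRoot r₁) (h₂ : a.IsRoot r₂)
    (hcong : ∃ m : ℕ, 0 < m ∧ r₁ - r₂ = m) :
    ¬ IsSimpleRing (GWA k (Polynomial k) 1 ![shiftDown k] ![a]) := by
  obtain ⟨m, hm, hr⟩ := hcong
  have hm_root : a.IsRoot (r₂ + m) := by rwa [← hr, add_sub_cancel]
  let I := TwoSidedIdeal.ofMapsInto (gwaAction a r₂ h₂).toRingHom (supported k k (Set.Ici m))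
    (supported_Ici_le_comap_gwaAction a r₂ h₂ hm_root)
  have hxI : GWA.x k k[X] ![shiftDown k] ![a] 0 ^ m ∈ I := by
    refine TwoSidedIdeal.mem_ofMapsInto.2 fun v => ?_
    rw [AlgHom.toRingHom_eq_coe, RingHom.coe_coe, map_pow, gwaAction_x]
    exact raiseOp_pow_mem_supported_Ici m v
  have hx0 : GWA.x k k[X] ![shiftDown k] ![a] 0 ^ m ≠ 0 := by
    intro h
    have h' := LinearMap.congr_fun (congrArg (gwaAction a r₂ h₂) h) (single 0 1)
    rw [map_pow, gwaAction_x, raiseOp_pow_single, map_zero, LinearMap.zero_apply,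
      single_eq_zero] at h'
    exact one_ne_zero h'
  have h1I : (1 : GWA k k[X] 1 ![shiftDown k] ![a]) ∉ I := by
    intro h
    have h' := (mem_supported' _ _).1 (TwoSidedIdeal.mem_ofMapsInto.1 h (single 0 1)) 0
      (by simpa using hm.ne')
    rw [map_one, Module.End.one_apply, single_eq_same] at h'
    exact one_ne_zero h'
  exact fun _ => h1I (IsSimpleRing.one_mem_of_ne_zero_mem I hx0 hxI)

/-- If `a ∈ k[z]` is nonzero and has a pair of roots `r₁, r₂` with
`r₁ - r₂` a positive integer, then the classical GWA `J(a) = k[z](σ, a)` with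
`σ(z) = z - 1` is not simple. -/
theorem classical_gwa_congruent_roots_not_simple (k : Type*) [Field k] [IsAlgClosed k]
    [CharZero k] (a : Polynomial k) (ha : a ≠ 0)
    (r₁ r₂ : k) (h₁ : a.IsRoot r₁) (h₂ : a.IsRoot r₂)
    (hcong : ∃ m : ℕ, 0 < m ∧ r₁ - r₂ = m) :
    ¬ IsSimpleRing (GWA k (Polynomial k) 1 ![shiftDown k] ![a]) :=
  classical_gwa_congruent_roots_not_simple_general k a r₁ r₂ h₁ h₂ hcong
end

section
/- For λ ∈ k not an integer, the vector space V^λ with basis {v_i : i ∈ ℤ}, with A_1(k)-action p·v_i = v_{i+1} and q·v_i = (i+λ)·v_{i-1}, is a simple left module over the first Weyl algebra. -/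
/-! The element `qp` acts diagonally on the basis, `qp · v_i = (i + 1 + λ) v_i`, and in
characteristic zero these eigenvalues are pairwise distinct. Applying `qp - (i + 1 + λ)` to a
nonzero vector of a submodule kills its `v_i`-coordinate and keeps the others, so a vector of
minimal support in a nonzero submodule is a multiple of a single `v_i`. Since `i + λ ≠ 0` for all
`i`, the operators `p` and `q` then carry `v_i` to a nonzero multiple of every `v_j`. -/

/-- Presentation relation of the first Weyl algebra: `q * p = p * q + 1`,
where `p` is the generator `0` and `q` the generator `1`. -/
inductive WeylRel (k : Type*) [CommRing k] :
    FreeAlgebra k (Fin 2) → FreeAlgebra k (Fin 2) → Prop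
  | qp : WeylRel k (FreeAlgebra.ι k 1 * FreeAlgebra.ι k 0)
      (FreeAlgebra.ι k 0 * FreeAlgebra.ι k 1 + 1)

/-- The first Weyl algebra `A₁(k)`, generated by `p, q` with `qp - pq = 1`. -/
abbrev WeylAlgebra (k : Type*) [CommRing k] : Type _ := RingQuot (WeylRel k)

/-- The generator `p` of the first Weyl algebra. -/
noncomputable def Wp (k : Type*) [CommRing k] : WeylAlgebra k :=
  RingQuot.mkAlgHom k (WeylRel k) (FreeAlgebra.ι k 0)

/-- The generator `q` of the first Weyl algebra. -/
noncomputable def Wq (k : Type*) [CommRing k] : WeylAlgebra k :=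
  RingQuot.mkAlgHom k (WeylRel k) (FreeAlgebra.ι k 1)

namespace Module.Basis

section CommRing

variable {R V ι : Type*} [CommRing R] [AddCommGroup V] [Module R V]
  (b : Basis ι R V) {f : Module.End R V} {μ : ι → R}

theorem repr_sub_smul_apply_of_eigen (hf : ∀ j, f (b j) = μ j • b j) (x : V) (i l : ι) :
    b.repr (f x - μ i • x) l = (μ l - μ i) * b.repr x l := by
  have hcoord : b.coord l ∘ₗ f = μ l • b.coord l := b.ext fun j => by
    rcases eq_or_ne j l with rfl | hjl
    · simp [hf]
    · simp [hf, hjl]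
  have hfx : b.repr (f x) l = μ l * b.repr x l := LinearMap.congr_fun hcoord x
  rw [map_sub, map_smul, Finsupp.sub_apply, Finsupp.smul_apply, hfx, smul_eq_mul, sub_mul]

theorem support_repr_sub_smul_of_eigen [NoZeroDivisors R] [DecidableEq ι]
    (hf : ∀ j, f (b j) = μ j • b j) (hμ : Function.Injective μ) (x : V) (i : ι) :
    (b.repr (f x - μ i • x)).support = (b.repr x).support.erase i := by
  ext l
  rw [Finsupp.mem_support_iff, Finset.mem_erase, Finsupp.mem_support_iff,
    repr_sub_smul_apply_of_eigen b hf, mul_ne_zero_iff, sub_ne_zero, hμ.ne_iff]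

end CommRing

variable {K V ι : Type*} [Field K] [AddCommGroup V] [Module K V]
  (b : Basis ι K V) {f : Module.End K V} {μ : ι → K}

theorem exists_mem_of_invariant_of_eigen (hf : ∀ j, f (b j) = μ j • b j)
    (hμ : Function.Injective μ) {p : Submodule K V} (hp : ∀ x ∈ p, f x ∈ p) (hne : p ≠ ⊥) :
    ∃ i, b i ∈ p := by
  classical
  obtain ⟨x, hx, hx0⟩ := p.ne_bot_iff.mp hne
  induction hn : (b.repr x).support.card using Nat.strong_induction_on generalizing x with
  | _ n ih =>
  obtain ⟨i, hi⟩ := Finsupp.support_nonempty_iff.mpr (b.repr.map_ne_zero_iff.mpr hx0)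
  by_cases hsingle : (b.repr x).support = {i}
  · obtain ⟨c, hc⟩ : ∃ c, b.repr x = Finsupp.single i c :=
      ⟨_, Finsupp.support_subset_singleton.mp hsingle.subset⟩
    have hc0 : c ≠ 0 := by rintro rfl; simp_all
    have hxc : x = c • b i := by rw [← b.repr_symm_single, ← hc, LinearEquiv.symm_apply_apply]
    exact ⟨i, by simpa [hxc, smul_smul, hc0] using p.smul_mem c⁻¹ hx⟩
  obtain ⟨j, hj, hji⟩ := ((Finset.nontrivial_iff_ne_singleton hi).mpr hsingle).exists_ne i
  have hsupp := support_repr_sub_smul_of_eigen b hf hμ x i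
  refine ih _ ?_ (f x - μ i • x) (p.sub_mem (hp x hx) (p.smul_mem _ hx)) ?_ rfl
  · rw [hsupp, Finset.card_erase_of_mem hi, ← hn]
    exact Nat.sub_lt (Finset.card_pos.mpr ⟨i, hi⟩) one_pos
  · intro h0
    have hj' : j ∈ (b.repr (f x - μ i • x)).support := hsupp ▸ Finset.mem_erase.mpr ⟨hji, hj⟩
    simp [h0] at hj'

end Module.Basis

theorem Wq_mul_Wp_smul_basis {k M : Type*} [CommRing k] [AddCommGroup M] [Module k M]
    [Module (WeylAlgebra k) M] (b : Module.Basis ℤ k M) {lam : k}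
    (hp : ∀ i : ℤ, Wp k • b i = b (i + 1))
    (hq : ∀ i : ℤ, Wq k • b i = ((i : k) + lam) • b (i - 1)) (i : ℤ) :
    (Wq k * Wp k) • b i = ((i : k) + 1 + lam) • b i := by
  rw [mul_smul, hp, hq, add_sub_cancel_right]
  push_cast
  ring_nf

section WeylModule

variable {k M : Type*} [Field k] [AddCommGroup M] [Module k M] [Module (WeylAlgebra k) M]
  [IsScalarTower k (WeylAlgebra k) M] (b : Module.Basis ℤ k M) {lam : k}

theorem exists_basis_mem_of_ne_bot [CharZero k] (hp : ∀ i : ℤ, Wp k • b i = b (i + 1))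
    (hq : ∀ i : ℤ, Wq k • b i = ((i : k) + lam) • b (i - 1))
    {N : Submodule (WeylAlgebra k) M} (hN : N ≠ ⊥) : ∃ i, b i ∈ N := by
  have hμ : Function.Injective fun i : ℤ => (i : k) + 1 + lam := fun i j hij => by
    simpa using hij
  have hN' : N.restrictScalars k ≠ ⊥ := by rwa [Ne, Submodule.restrictScalars_eq_bot_iff]
  exact b.exists_mem_of_invariant_of_eigen (f := Algebra.lsmul k k M (Wq k * Wp k))
    (Wq_mul_Wp_smul_basis b hp hq) hμ (fun x hx => N.smul_mem _ hx) hN'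

theorem basis_mem_of_basis_mem (hlam : ∀ n : ℤ, lam ≠ (n : k))
    (hp : ∀ i : ℤ, Wp k • b i = b (i + 1))
    (hq : ∀ i : ℤ, Wq k • b i = ((i : k) + lam) • b (i - 1))
    {N : Submodule (WeylAlgebra k) M} {i : ℤ} (hi : b i ∈ N) (j : ℤ) : b j ∈ N := by
  induction j using Int.inductionOn' (b := i) with
  | zero => exact hi
  | succ j _ hj => simpa [hp] using N.smul_mem (Wp k) hj
  | pred j _ hj =>
    have hj0 : (j : k) + lam ≠ 0 := fun h => hlam (-j) (by push_cast; linear_combination h)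
    simpa [hq, smul_smul, hj0] using N.smul_of_tower_mem ((j : k) + lam)⁻¹ (N.smul_mem (Wq k) hj)

end WeylModule

/-- For `λ ∈ k` not an integer, the module `V^λ` with basis
`{v_i : i ∈ ℤ}` and action `p·v_i = v_{i+1}`, `q·v_i = (i + λ)·v_{i-1}` is a
simple left module over the first Weyl algebra. -/
theorem weyl_Vlambda_isSimpleModule (k : Type*) [Field k] [CharZero k]
    (lam : k) (hlam : ∀ n : ℤ, lam ≠ (n : k))
    (M : Type*) [AddCommGroup M] [Module k M] [Module (WeylAlgebra k) M]
    [IsScalarTower k (WeylAlgebra k) M]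
    (b : Module.Basis ℤ k M)
    (hp : ∀ i : ℤ, Wp k • b i = b (i + 1))
    (hq : ∀ i : ℤ, Wq k • b i = ((i : k) + lam) • b (i - 1)) :
    IsSimpleModule (WeylAlgebra k) M := by
  have : Nontrivial M := ⟨⟨b 0, 0, b.ne_zero 0⟩⟩
  refine (isSimpleModule_iff _ _).mpr ⟨fun N => or_iff_not_imp_left.mpr fun hN => ?_⟩
  obtain ⟨i, hi⟩ := exists_basis_mem_of_ne_bot b hp hq hN
  have hmem := basis_mem_of_basis_mem b hlam hp hq hi
  rw [← Submodule.restrictScalars_eq_top_iff k, eq_top_iff, ← b.span_eq, Submodule.span_le]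
  rintro _ ⟨j, rfl⟩
  exact hmem j
end

section
/- The modules V⁺ (supported in degrees ≥ 0, with p·v_i = v_{i+1}, q·v_i = i v_{i-1}) and V^λ for λ ∈ (0,1) (supported on ℤ with q·v_i = (i+λ)v_{i-1}) over the first Weyl algebra are not isomorphic, and V^λ ≇ V^μ for distinct λ, μ ∈ (0,1). -/
/-!
Both statements come from one isomorphism invariant: the eigenvalues of `pq` acting on the
module. On `V^λ` the operator `pq` is diagonal, `pq·v_i = (i + λ) v_i`, so its eigenvalues are
exactly `λ + ℤ`. On `V⁺` it kills `v_0`, so `0` is an eigenvalue, and `0 ∉ λ + ℤ`; likewise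
`λ ∈ μ + ℤ` forces `λ = μ` when both lie in `(0,1)`.
-/

open Module End

lemma Int.eq_zero_of_cast_add_eq {k : Type*} [CommRing k] [LinearOrder k] [IsStrictOrderedRing k]
    {i : ℤ} {x y : k} (hx : x ∈ Set.Ico 0 1) (hy : y ∈ Set.Ico 0 1) (h : (i : k) + x = y) :
    i = 0 := by
  have hlt : (i : k) < (1 : ℤ) := by push_cast; linarith [hx.1, hy.2]
  have hgt : ((-1 : ℤ) : k) < i := by push_cast; linarith [hx.2, hy.1]
  have := Int.cast_lt.1 hlt
  have := Int.cast_lt.1 hgt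
  omega

lemma Module.End.hasEigenvalue_iff_mem_range_of_basis {k V ι : Type*} [CommRing k] [IsDomain k]
    [AddCommGroup V] [Module k V] (c : Basis ι k V) {T : End k V} {d : ι → k}
    (hT : ∀ i, T (c i) = d i • c i) {t : k} :
    T.HasEigenvalue t ↔ t ∈ Set.range d := by
  constructor
  · intro ht
    obtain ⟨v, hv⟩ := ht.exists_hasEigenvector
    have hcoord : ∀ i, d i * c.repr v i = t * c.repr v i := by
      intro i
      have hdiag : (c.coord i).comp T = d i • c.coord i := c.ext fun j => by
        by_cases hij : j = i
        · simp [hT, hij]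
        · simp [hT, Ne.symm hij]
      simpa [hv.apply_eq_smul] using (LinearMap.congr_fun hdiag v).symm
    obtain ⟨i, hi⟩ : ∃ i, c.repr v i ≠ 0 := by
      by_contra! h
      exact hv.2 (c.repr.injective (by ext i; simpa using h i))
    exact ⟨i, mul_right_cancel₀ hi (hcoord i)⟩
  · rintro ⟨i, rfl⟩
    exact hasEigenvalue_of_hasEigenvector ⟨mem_eigenspace_iff.2 (hT i), c.ne_zero i⟩

section WeightModules

variable {k A : Type*} [CommRing k] [Ring A] [Algebra k A]
  {V W : Type*} [AddCommGroup V] [Module k V] [Module A V] [IsScalarTower k A V]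
  [AddCommGroup W] [Module k W] [Module A W] [IsScalarTower k A W]

lemma Module.End.HasEigenvalue.map_of_injective {a : A} {t : k}
    (ht : HasEigenvalue (DistribSMul.toLinearMap k V a) t) {f : V →ₗ[A] W}
    (hf : Function.Injective f) : HasEigenvalue (DistribSMul.toLinearMap k W a) t := by
  obtain ⟨v, hv⟩ := ht.exists_hasEigenvector
  refine hasEigenvalue_of_hasEigenvector (x := f v) ⟨mem_eigenspace_iff.2 ?_, ?_⟩
  · simpa [f.map_smul_of_tower] using congrArg f hv.apply_eq_smul
  · exact (map_ne_zero_iff f hf).2 hv.2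

lemma mul_smul_eq_of_raising_lowering (p q : A) (lam : k) (c : ℤ → V)
    (hp : ∀ i, p • c i = c (i + 1)) (hq : ∀ i, q • c i = ((i : k) + lam) • c (i - 1)) (i : ℤ) :
    (p * q) • c i = ((i : k) + lam) • c i := by
  rw [mul_smul, hq, smul_comm, hp, sub_add_cancel]

end WeightModules

theorem weyl_weight_modules_not_iso_general (k : Type*) [Field k] [LinearOrder k] [IsStrictOrderedRing k]
    (lam mu : k) (hlam : 0 < lam ∧ lam < 1) (hmu : 0 < mu ∧ mu < 1)
    -- the module V⁺ :
    (M : Type*) [AddCommGroup M] [Module k M] [Module (WeylAlgebra k) M]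
    [IsScalarTower k (WeylAlgebra k) M] (b : Module.Basis ℕ k M)
    (hqM0 : Wq k • b 0 = 0)
    -- the module V^λ :
    (N : Type*) [AddCommGroup N] [Module k N] [Module (WeylAlgebra k) N]
    [IsScalarTower k (WeylAlgebra k) N] (c : Module.Basis ℤ k N)
    (hpN : ∀ i : ℤ, Wp k • c i = c (i + 1))
    (hqN : ∀ i : ℤ, Wq k • c i = ((i : k) + lam) • c (i - 1))
    -- the module V^μ :
    (N' : Type*) [AddCommGroup N'] [Module k N'] [Module (WeylAlgebra k) N']
    [IsScalarTower k (WeylAlgebra k) N'] (c' : Module.Basis ℤ k N')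
    (hpN' : ∀ i : ℤ, Wp k • c' i = c' (i + 1))
    (hqN' : ∀ i : ℤ, Wq k • c' i = ((i : k) + mu) • c' (i - 1)) :
    ¬ Nonempty (M ≃ₗ[WeylAlgebra k] N) ∧
      (lam ≠ mu → ¬ Nonempty (N ≃ₗ[WeylAlgebra k] N')) := by
  have hlam' : lam ∈ Set.Ico 0 1 := ⟨hlam.1.le, hlam.2⟩
  have hmu' : mu ∈ Set.Ico 0 1 := ⟨hmu.1.le, hmu.2⟩
  have eigen_N := fun t ↦ hasEigenvalue_iff_mem_range_of_basis c (t := t)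
    (T := DistribSMul.toLinearMap k N (Wp k * Wq k))
    (mul_smul_eq_of_raising_lowering (Wp k) (Wq k) lam c hpN hqN)
  have eigen_N' := fun t ↦ hasEigenvalue_iff_mem_range_of_basis c' (t := t)
    (T := DistribSMul.toLinearMap k N' (Wp k * Wq k))
    (mul_smul_eq_of_raising_lowering (Wp k) (Wq k) mu c' hpN' hqN')
  constructor
  · rintro ⟨f⟩
    have eigen_M : HasEigenvalue (DistribSMul.toLinearMap k M (Wp k * Wq k)) 0 :=
      hasEigenvalue_of_hasEigenvector
        ⟨mem_eigenspace_iff.2 (by simp [mul_smul, hqM0]), b.ne_zero 0⟩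
    obtain ⟨i, hi⟩ := (eigen_N _).1 (eigen_M.map_of_injective f.injective)
    obtain rfl := Int.eq_zero_of_cast_add_eq hlam' ⟨le_rfl, one_pos⟩ hi
    exact hlam.1.ne' (by simpa using hi)
  · rintro hne ⟨f⟩
    have eigen_lam := (eigen_N lam).2 ⟨0, by simp⟩
    obtain ⟨j, hj⟩ := (eigen_N' _).1 (eigen_lam.map_of_injective f.injective)
    obtain rfl := Int.eq_zero_of_cast_add_eq hmu' hlam' hj
    exact hne (by simpa using hj.symm)

/-- Over the first Weyl algebra, the weight module `V⁺`
(with basis indexed by `ℕ`, `p·v_i = v_{i+1}`, `q·v_i = i v_{i-1}`) is not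
isomorphic to `V^λ` for `λ ∈ (0,1)` (with basis indexed by `ℤ`,
`q·v_i = (i+λ) v_{i-1}`), and `V^λ ≇ V^μ` for distinct `λ, μ ∈ (0,1)`. -/
theorem weyl_weight_modules_not_iso (k : Type*) [Field k] [LinearOrder k] [IsStrictOrderedRing k]
    (lam mu : k) (hlam : 0 < lam ∧ lam < 1) (hmu : 0 < mu ∧ mu < 1)
    -- the module V⁺ :
    (M : Type*) [AddCommGroup M] [Module k M] [Module (WeylAlgebra k) M]
    [IsScalarTower k (WeylAlgebra k) M] (b : Module.Basis ℕ k M)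
    (hpM : ∀ i : ℕ, Wp k • b i = b (i + 1))
    (hqM0 : Wq k • b 0 = 0)
    (hqM : ∀ i : ℕ, Wq k • b (i + 1) = ((i : k) + 1) • b i)
    -- the module V^λ :
    (N : Type*) [AddCommGroup N] [Module k N] [Module (WeylAlgebra k) N]
    [IsScalarTower k (WeylAlgebra k) N] (c : Module.Basis ℤ k N)
    (hpN : ∀ i : ℤ, Wp k • c i = c (i + 1))
    (hqN : ∀ i : ℤ, Wq k • c i = ((i : k) + lam) • c (i - 1))
    -- the module V^μ :
    (N' : Type*) [AddCommGroup N'] [Module k N'] [Module (WeylAlgebra k) N']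
    [IsScalarTower k (WeylAlgebra k) N'] (c' : Module.Basis ℤ k N')
    (hpN' : ∀ i : ℤ, Wp k • c' i = c' (i + 1))
    (hqN' : ∀ i : ℤ, Wq k • c' i = ((i : k) + mu) • c' (i - 1)) :
    ¬ Nonempty (M ≃ₗ[WeylAlgebra k] N) ∧
      (lam ≠ mu → ¬ Nonempty (N ≃ₗ[WeylAlgebra k] N')) :=
  weyl_weight_modules_not_iso_general k lam mu hlam hmu M b hqM0 N c hpN hqN N' c' hpN' hqN'
end

section
/- For a primitive ℓ-th root of unity μ ∈ k (ℓ ≥ 2), the fixed ring of the first Weyl algebra A_1(k) under the automorphism p ↦ μp, q ↦ μ⁻¹q is not isomorphic to A_1(k). -/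
/-!
Let `A₁(k)` act on `k[X]` by `p = X ·` and `q = d/dX`, and consider the trace of `y` composed
with `f(X) ↦ f(μX)`, that is `τ(y) = ∑ₙ μⁿ (y • Xⁿ).coeff n`. The diagonal entry of a differential
operator is a polynomial in `n`, and for `μ ≠ 1` such a sum has a canonical regularisation, which
keeps the twisted cyclicity `τ(xy) = τ(y φ(x))`. On the fixed ring `τ` is therefore a genuine trace
and kills `ba - ab`, whereas `τ(1) = (1 - μ)⁻¹ ≠ 0`: no two fixed elements satisfy `ba = ab + 1`.
-/

open Polynomial

noncomputable section

namespace Polynomial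

theorem eq_of_eval_natCast_eq {R : Type*} [CommRing R] [IsDomain R] [CharZero R]
    {f g : R[X]} (h : ∀ n : ℕ, f.eval (n : R) = g.eval (n : R)) : f = g :=
  eq_of_infinite_eval_eq f g <|
    Set.infinite_of_injective_forall_mem Nat.cast_injective fun n => show _ = _ from h n

variable (R : Type*) [CommRing R] in
theorem derivative_mul_mulLeft_X :
    (derivative : Module.End R R[X]) * LinearMap.mulLeft R X =
      LinearMap.mulLeft R X * derivative + 1 :=
  LinearMap.ext fun f => by simp [derivative_mul, add_comm]

variable {K : Type*} [Field K]

theorem surjective_of_injective_of_degree_le {f : K[X] →ₗ[K] K[X]} (hinj : Function.Injective f)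
    (hdeg : ∀ p, (f p).degree ≤ p.degree) : Function.Surjective f := by
  intro q
  let n := q.natDegree + 1
  have hmaps : ∀ p ∈ degreeLT K n, f p ∈ degreeLT K n := fun p hp =>
    mem_degreeLT.2 ((hdeg p).trans_lt (mem_degreeLT.1 hp))
  have hsurj : Function.Surjective (f.restrict hmaps) :=
    LinearMap.injective_iff_surjective.1 fun a b hab =>
      Subtype.ext (hinj (congrArg Subtype.val hab))
  obtain ⟨p, hp⟩ := hsurj ⟨q, mem_degreeLT.2
    (degree_le_natDegree.trans_lt (by exact_mod_cast Nat.lt_succ_self _))⟩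
  exact ⟨p, congrArg Subtype.val hp⟩

def twistedDiff (μ : K) : K[X] →ₗ[K] K[X] := LinearMap.id - μ • taylor 1

theorem degree_twistedDiff_le (μ : K) (f : K[X]) : (twistedDiff μ f).degree ≤ f.degree :=
  (degree_sub_le _ _).trans <| max_le le_rfl <|
    (degree_smul_le _ _).trans (degree_taylor f 1).le

variable {μ : K}

theorem twistedDiff_injective (hμ : μ ≠ 1) : Function.Injective (twistedDiff μ) := by
  refine (injective_iff_map_eq_zero _).2 fun f hf => ?_
  by_contra hf0
  have hfix : f = μ • taylor 1 f := sub_eq_zero.1 hf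
  have htop : (taylor 1 f).coeff f.natDegree = f.leadingCoeff := by
    rw [← natDegree_taylor f 1, coeff_natDegree, leadingCoeff_taylor]
  have hlead : f.leadingCoeff = μ * f.leadingCoeff := by
    calc f.leadingCoeff = (μ • taylor 1 f).coeff f.natDegree := by rw [← hfix]; rfl
      _ = μ * f.leadingCoeff := by rw [coeff_smul, htop, smul_eq_mul]
  exact hμ (mul_right_cancel₀ (leadingCoeff_ne_zero.2 hf0) (by rw [one_mul, ← hlead]))

def twistedDiffEquiv (hμ : μ ≠ 1) : K[X] ≃ₗ[K] K[X] :=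
  .ofBijective (twistedDiff μ) ⟨twistedDiff_injective hμ,
    surjective_of_injective_of_degree_le (twistedDiff_injective hμ) (degree_twistedDiff_le μ)⟩

/-- The regularised `∑ₙ μⁿ f(n)`: if `h(X) - μ h(X + 1) = f`, the sum telescopes formally
to `h(0)`. -/
def regSum (hμ : μ ≠ 1) : K[X] →ₗ[K] K :=
  leval 0 ∘ₗ (twistedDiffEquiv hμ).symm.toLinearMap

theorem regSum_eq (hμ : μ ≠ 1) (f : K[X]) :
    regSum hμ f = f.eval 0 + μ * regSum hμ (taylor 1 f) := by
  set h := (twistedDiffEquiv hμ).symm f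
  have hf : f = h - μ • taylor 1 h := ((twistedDiffEquiv hμ).apply_symm_apply f).symm
  have hshift : taylor 1 f = twistedDiffEquiv hμ (taylor 1 h) := by
    rw [hf, map_sub, map_smul]
    rfl
  have hsum : regSum hμ f = h.eval 0 := rfl
  have hsum_shift : regSum hμ (taylor 1 f) = h.eval 1 := by
    simp [regSum, hshift, taylor_eval]
  rw [hsum, hsum_shift]
  conv_rhs => rw [hf, eval_sub, eval_smul, taylor_eval, smul_eq_mul, zero_add]
  ring

theorem regSum_one (hμ : μ ≠ 1) : regSum hμ (1 : K[X]) = (1 - μ)⁻¹ := by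
  have h := regSum_eq hμ 1
  rw [taylor_one, C_1, eval_one] at h
  have : (1 - μ) ≠ 0 := sub_ne_zero.2 hμ.symm
  field_simp
  linear_combination h

end Polynomial

namespace WeylAlgebra

section CommRing

variable {k : Type*} [CommRing k]

theorem wq_mul_wp : Wq k * Wp k = Wp k * Wq k + 1 := by
  have h := RingQuot.mkAlgHom_rel k (WeylRel.qp (k := k))
  rwa [map_mul, map_add, map_one, map_mul] at h

theorem induction_left {C : WeylAlgebra k → Prop} (one : C 1)
    (add : ∀ a b, C a → C b → C (a + b)) (smul : ∀ (r : k) a, C a → C (r • a))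
    (mul_wp : ∀ a, C a → C (Wp k * a)) (mul_wq : ∀ a, C a → C (Wq k * a))
    (y : WeylAlgebra k) : C y := by
  suffices h : ∀ a, C a → C (y * a) by simpa using h 1 one
  obtain ⟨x, rfl⟩ := RingQuot.mkAlgHom_surjective k (WeylRel k) y
  induction x using FreeAlgebra.induction with
  | grade0 r => intro a ha; rw [AlgHom.commutes, ← Algebra.smul_def]; exact smul r a ha
  | grade1 i => fin_cases i; exacts [mul_wp, mul_wq]
  | mul x y hx hy => intro a ha; rw [map_mul, mul_assoc]; exact hx _ (hy a ha)
  | add x y hx hy => intro a ha; rw [map_add, add_mul]; exact add _ _ (hx a ha) (hy a ha)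

variable (k) in
def polyRep : WeylAlgebra k →ₐ[k] Module.End k k[X] :=
  RingQuot.liftAlgHom k ⟨FreeAlgebra.lift k ![LinearMap.mulLeft k X, derivative], by
    rintro _ _ ⟨⟩
    simpa using derivative_mul_mulLeft_X k⟩

theorem polyRep_wp : polyRep k (Wp k) = LinearMap.mulLeft k X := by
  simp [polyRep, Wp]

theorem polyRep_wq : polyRep k (Wq k) = derivative := by
  simp [polyRep, Wq]

variable (k) in
def diffOps : Submodule k (Module.End k k[X]) :=
  Submodule.span k (Set.range fun ij : ℕ × ℕ => LinearMap.mulLeft k (X ^ ij.1) * derivative ^ ij.2)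

theorem mul_mem_diffOps {A T : Module.End k k[X]}
    (hA : ∀ i j : ℕ, A * (LinearMap.mulLeft k (X ^ i) * derivative ^ j) ∈ diffOps k)
    (hT : T ∈ diffOps k) : A * T ∈ diffOps k :=
  (Submodule.span_le (p := (diffOps k).comap (LinearMap.mulLeft k A))).2
    (by rintro _ ⟨⟨i, j⟩, rfl⟩; exact hA i j) hT

theorem polyRep_mem_diffOps (y : WeylAlgebra k) : polyRep k y ∈ diffOps k := by
  have gen_mem : ∀ i j : ℕ, LinearMap.mulLeft k (X ^ i) * derivative ^ j ∈ diffOps k :=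
    fun i j => Submodule.subset_span ⟨(i, j), rfl⟩
  induction y using induction_left with
  | one => simpa [Module.End.one_eq_id, Module.End.mul_eq_comp] using gen_mem 0 0
  | add a b ha hb => rw [map_add]; exact add_mem ha hb
  | smul r a ha => rw [map_smul]; exact Submodule.smul_mem _ r ha
  | mul_wp a ha =>
    rw [map_mul, polyRep_wp]
    refine mul_mem_diffOps (fun i j => ?_) ha
    have hX : LinearMap.mulLeft k X * LinearMap.mulLeft k (X ^ i) =
        LinearMap.mulLeft k (X ^ (i + 1) : k[X]) := by
      rw [pow_succ', LinearMap.mulLeft_mul]; rfl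
    rw [← mul_assoc, hX]
    exact gen_mem (i + 1) j
  | mul_wq a ha =>
    rw [map_mul, polyRep_wq]
    refine mul_mem_diffOps (fun i j => ?_) ha
    have leibniz : derivative * (LinearMap.mulLeft k (X ^ i) * derivative ^ j) =
        (i : k) • (LinearMap.mulLeft k (X ^ (i - 1)) * derivative ^ j) +
          LinearMap.mulLeft k (X ^ i) * derivative ^ (j + 1) := by
      refine LinearMap.ext fun f => ?_
      simp [derivative_mul, derivative_X_pow, pow_succ', smul_eq_C_mul, mul_assoc]
    rw [leibniz]
    exact add_mem (Submodule.smul_mem _ _ (gen_mem _ _)) (gen_mem _ _)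

theorem exists_eval_eq_coeff_of_mem_diffOps {T : Module.End k k[X]} (hT : T ∈ diffOps k) :
    ∃ f : k[X], ∀ n : ℕ, f.eval (n : k) = (T (X ^ n)).coeff n := by
  induction hT using Submodule.span_induction with
  | mem _ h =>
    obtain ⟨⟨i, j⟩, rfl⟩ := h
    refine ⟨if i = j then descPochhammer k j else 0, fun n => ?_⟩
    simp only [Module.End.mul_apply, LinearMap.mulLeft_apply, Module.End.pow_apply,
      iterate_derivative_X_pow_eq_smul, mul_smul_comm, coeff_smul, coeff_X_pow_mul', coeff_X_pow]
    rcases lt_or_ge n j with hnj | hjn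
    · simp [Nat.descFactorial_eq_zero_iff_lt.2 hnj, apply_ite (eval (n : k)),
        descPochhammer_eval_eq_descFactorial]
    · by_cases hij : i = j
      · simp [hij, hjn, descPochhammer_eval_eq_descFactorial]
      · have : ¬(i ≤ n ∧ n - i = n - j) := by omega
        rw [if_neg hij, eval_zero, ← ite_and, if_neg this, smul_zero]
  | zero => exact ⟨0, by simp⟩
  | add S T _ _ hS hT =>
    obtain ⟨f, hf⟩ := hS
    obtain ⟨g, hg⟩ := hT
    exact ⟨f + g, by simp [hf, hg]⟩
  | smul c T _ hT =>
    obtain ⟨f, hf⟩ := hT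
    exact ⟨c • f, by simp [hf]⟩

section CharZero

variable [IsDomain k] [CharZero k]

def diagPoly : WeylAlgebra k →ₗ[k] k[X] where
  toFun y := (exists_eval_eq_coeff_of_mem_diffOps (polyRep_mem_diffOps y)).choose
  map_add' a b := eq_of_eval_natCast_eq fun n => by
    have spec y :=
      (exists_eval_eq_coeff_of_mem_diffOps (polyRep_mem_diffOps (k := k) y)).choose_spec n
    rw [eval_add, spec, spec, spec, map_add, LinearMap.add_apply, coeff_add]
  map_smul' c a := eq_of_eval_natCast_eq fun n => by
    have spec y :=
      (exists_eval_eq_coeff_of_mem_diffOps (polyRep_mem_diffOps (k := k) y)).choose_spec n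
    rw [RingHom.id_apply, eval_smul, spec, spec, map_smul, LinearMap.smul_apply, coeff_smul]

theorem eval_diagPoly (y : WeylAlgebra k) (n : ℕ) :
    (diagPoly y).eval (n : k) = (polyRep k y (X ^ n)).coeff n :=
  (exists_eval_eq_coeff_of_mem_diffOps (polyRep_mem_diffOps y)).choose_spec n

theorem diagPoly_one : diagPoly (1 : WeylAlgebra k) = 1 :=
  eq_of_eval_natCast_eq fun n => by simp [eval_diagPoly]

theorem eval_zero_diagPoly_wp_mul (y : WeylAlgebra k) : (diagPoly (Wp k * y)).eval 0 = 0 := by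
  simpa [polyRep_wp] using eval_diagPoly (Wp k * y) 0

theorem taylor_diagPoly_wp_mul (y : WeylAlgebra k) :
    taylor 1 (diagPoly (Wp k * y)) = diagPoly (y * Wp k) :=
  eq_of_eval_natCast_eq fun n => by
    rw [taylor_eval, ← Nat.cast_succ, eval_diagPoly, eval_diagPoly]
    simp [polyRep_wp, pow_succ']

theorem eval_zero_diagPoly_mul_wq (y : WeylAlgebra k) : (diagPoly (y * Wq k)).eval 0 = 0 := by
  simpa [polyRep_wq] using eval_diagPoly (y * Wq k) 0

theorem taylor_diagPoly_mul_wq (y : WeylAlgebra k) :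
    taylor 1 (diagPoly (y * Wq k)) = diagPoly (Wq k * y) :=
  eq_of_eval_natCast_eq fun n => by
    rw [taylor_eval, ← Nat.cast_succ, eval_diagPoly, eval_diagPoly, map_mul, map_mul, polyRep_wq,
      Module.End.mul_apply, Module.End.mul_apply, derivative_X_pow, ← smul_eq_C_mul, map_smul,
      coeff_smul, coeff_derivative, smul_eq_mul, mul_comm]
    simp

end CharZero

end CommRing

section Field

variable {k : Type*} [Field k] [CharZero k] {μ : k}

def twistedTrace (hμ : μ ≠ 1) : WeylAlgebra k →ₗ[k] k :=
  regSum hμ ∘ₗ diagPoly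

theorem twistedTrace_one (hμ : μ ≠ 1) : twistedTrace hμ (1 : WeylAlgebra k) = (1 - μ)⁻¹ := by
  simp [twistedTrace, diagPoly_one, regSum_one]

theorem twistedTrace_wp_mul (hμ : μ ≠ 1) (y : WeylAlgebra k) :
    twistedTrace hμ (Wp k * y) = μ * twistedTrace hμ (y * Wp k) := by
  simp only [twistedTrace, LinearMap.comp_apply]
  rw [regSum_eq, eval_zero_diagPoly_wp_mul, taylor_diagPoly_wp_mul, zero_add]

theorem twistedTrace_mul_wq (hμ : μ ≠ 1) (y : WeylAlgebra k) :
    twistedTrace hμ (y * Wq k) = μ * twistedTrace hμ (Wq k * y) := by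
  simp only [twistedTrace, LinearMap.comp_apply]
  rw [regSum_eq, eval_zero_diagPoly_mul_wq, taylor_diagPoly_mul_wq, zero_add]

theorem twistedTrace_mul_comm (hμ : μ ≠ 1) (hμ₀ : μ ≠ 0) {φ : WeylAlgebra k →ₐ[k] WeylAlgebra k}
    (hp : φ (Wp k) = μ • Wp k) (hq : φ (Wq k) = μ⁻¹ • Wq k) (x y : WeylAlgebra k) :
    twistedTrace hμ (x * y) = twistedTrace hμ (y * φ x) := by
  induction x using induction_left generalizing y with
  | one => simp
  | add a b ha hb => simp only [add_mul, map_add, mul_add, ha, hb]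
  | smul r a ha => simp only [smul_mul_assoc, map_smul, mul_smul_comm, ha]
  | mul_wp a ha =>
    calc twistedTrace hμ (Wp k * a * y) = μ * twistedTrace hμ (a * (y * Wp k)) := by
          rw [mul_assoc, twistedTrace_wp_mul, mul_assoc]
      _ = μ * twistedTrace hμ (y * Wp k * φ a) := by rw [ha]
      _ = twistedTrace hμ (y * φ (Wp k * a)) := by
          rw [map_mul φ, hp, smul_mul_assoc, mul_smul_comm, map_smul, smul_eq_mul, mul_assoc]
  | mul_wq a ha =>
    calc twistedTrace hμ (Wq k * a * y) = μ⁻¹ * twistedTrace hμ (a * (y * Wq k)) := by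
          rw [← mul_assoc a, twistedTrace_mul_wq, inv_mul_cancel_left₀ hμ₀, mul_assoc]
      _ = μ⁻¹ * twistedTrace hμ (y * Wq k * φ a) := by rw [ha]
      _ = twistedTrace hμ (y * φ (Wq k * a)) := by
          rw [map_mul φ, hq, smul_mul_assoc, mul_smul_comm, map_smul, smul_eq_mul, mul_assoc]

theorem mul_ne_mul_add_one_of_fixed (hμ : μ ≠ 1) (hμ₀ : μ ≠ 0)
    {φ : WeylAlgebra k →ₐ[k] WeylAlgebra k} (hp : φ (Wp k) = μ • Wp k)
    (hq : φ (Wq k) = μ⁻¹ • Wq k) {a b : WeylAlgebra k} (hb : φ b = b) : b * a ≠ a * b + 1 := by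
  intro hab
  have htrace := twistedTrace_mul_comm hμ hμ₀ hp hq b a
  rw [hb, hab, map_add, twistedTrace_one] at htrace
  exact inv_ne_zero (sub_ne_zero.2 hμ.symm) (add_eq_left.1 htrace)

end Field

end WeylAlgebra

end

theorem weyl_fixed_ring_not_iso_general (k : Type*) [Field k] [CharZero k]
    (ℓ : ℕ) (hℓ : 2 ≤ ℓ) (μ : k) (hμ : IsPrimitiveRoot μ ℓ)
    (φ : WeylAlgebra k ≃ₐ[k] WeylAlgebra k)
    (hp : φ (Wp k) = μ • Wp k) (hq : φ (Wq k) = μ⁻¹ • Wq k) :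
    ¬ Nonempty
      ((AlgHom.equalizer (φ : WeylAlgebra k →ₐ[k] WeylAlgebra k) (AlgHom.id k _)) ≃ₐ[k]
        WeylAlgebra k) := by
  rintro ⟨ψ⟩
  have hrel : ((ψ.symm (Wq k) : WeylAlgebra k)) * ψ.symm (Wp k) =
      ψ.symm (Wp k) * ψ.symm (Wq k) + 1 := by
    simpa using congrArg Subtype.val (congrArg ψ.symm WeylAlgebra.wq_mul_wp)
  have hfixed : φ (ψ.symm (Wq k)) = ψ.symm (Wq k) := (ψ.symm (Wq k)).2
  exact WeylAlgebra.mul_ne_mul_add_one_of_fixed (hμ.ne_one (by omega)) (hμ.ne_zero (by omega))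
    (φ := φ) hp hq hfixed hrel

/-- For a primitive `ℓ`-th root of unity `μ ∈ k` (`ℓ ≥ 2`), the fixed
ring of the first Weyl algebra `A₁(k)` under the automorphism `p ↦ μp`, `q ↦ μ⁻¹q`
is not isomorphic to `A₁(k)`. -/
theorem weyl_fixed_ring_not_iso (k : Type*) [Field k] [IsAlgClosed k] [CharZero k]
    (ℓ : ℕ) (hℓ : 2 ≤ ℓ) (μ : k) (hμ : IsPrimitiveRoot μ ℓ)
    (φ : WeylAlgebra k ≃ₐ[k] WeylAlgebra k)
    (hp : φ (Wp k) = μ • Wp k) (hq : φ (Wq k) = μ⁻¹ • Wq k) :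
    ¬ Nonempty
      ((AlgHom.equalizer (φ : WeylAlgebra k →ₐ[k] WeylAlgebra k) (AlgHom.id k _)) ≃ₐ[k]
        WeylAlgebra k) :=
  weyl_fixed_ring_not_iso_general k ℓ hℓ μ hμ φ hp hq
end
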